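/- Let Omega be a properly convex domain in P(R^d) with Hilbert metric d_Omega. Suppose {p_n} and {q_n} are sequences in Omega with p_n converging to p and q_n converging to q in the closure of Omega, and liminf d_Omega(p_n, q_n) < infinity. Then p and q lie in the same open face F of the boundary of Omega (or both in Omega), and d_F(p,q) <= liminf d_Omega(p_n, q_n), where d_F is the Hilbert metric of the face F viewed as a properly convex set open in its span. -/

import Mathlib

open Set Filter Topology

noncomputable section

/-- The vector space `ℝ^d`. -/
abbrev Vd (d : ℕ) := Fin d → ℝ

/-- Real projective space `P(ℝ^d)`. -/
abbrev Proj (d : ℕ) := Projectivization ℝ (Vd d)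

instance (d : ℕ) : TopologicalSpace (Proj d) :=
  instTopologicalSpaceQuotient (s := projectivizationSetoid ℝ (Vd d))

variable {d : ℕ}

/-- The affine chart associated to a nonzero linear functional `f`: a point `[v]` with
`f v ≠ 0` is sent to the representative `v / f v` in the affine hyperplane `{w : f w = 1}`. -/
def pchart (f : Vd d →ₗ[ℝ] ℝ) (x : Proj d) : Vd d := (f x.rep)⁻¹ • x.rep

/-- `C ⊆ P(ℝ^d)` is properly convex, realized in the affine chart determined by `f`:
its closure lies in the chart, and its image there is a bounded convex set. -/
structure IsPC (f : Vd d →ₗ[ℝ] ℝ) (C : Set (Proj d)) : Prop where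
  chartOK : ∀ x ∈ closure C, f (Projectivization.rep x) ≠ 0
  bounded : Bornology.IsBounded (pchart f '' C)
  convex : Convex ℝ (pchart f '' C)

/-- A properly convex domain: a nonempty open properly convex subset of `P(ℝ^d)`. -/
structure IsPCDomain (f : Vd d →ₗ[ℝ] ℝ) (Ω : Set (Proj d)) : Prop where
  pc : IsPC f Ω
  isOpen : IsOpen Ω
  nonempty : Ω.Nonempty

/-- The open projective segment `(x,y)`, computed in the affine chart of `f`. -/
def poseg (f : Vd d →ₗ[ℝ] ℝ) (x y : Proj d) : Set (Proj d) :=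
  {z | ∃ w ∈ openSegment ℝ (pchart f x) (pchart f y), ∃ hw : w ≠ 0, z = Projectivization.mk ℝ w hw}

/-- The closed projective segment `[x,y]`, computed in the affine chart of `f`. -/
def pcseg (f : Vd d →ₗ[ℝ] ℝ) (x y : Proj d) : Set (Proj d) :=
  {z | ∃ w ∈ segment ℝ (pchart f x) (pchart f y), ∃ hw : w ≠ 0, z = Projectivization.mk ℝ w hw}

/-- Parameters `t` for which `x + t(y - x)` lies in the closure of `K`. -/
def segSet (K : Set (Vd d)) (x y : Vd d) : Set ℝ := {t : ℝ | x + t • (y - x) ∈ closure K}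

/-- Hilbert distance on a bounded convex set `K` in an affine chart, via the cross ratio:
with `s = sSup`, `r = sInf` of the parameter set (so the boundary points are
`a = x + r(y-x)`, `b = x + s(y-x)`, ordered `a,x,y,b`), this is
`(1/2) log ( s(1-r) / ((s-1)(-r)) ) = (1/2) log (|x-b||y-a| / (|x-a||y-b|))`. -/
def affHilbertDist (K : Set (Vd d)) (x y : Vd d) : ℝ :=
  if x = y then 0 else
    (1/2) * Real.log ((sSup (segSet K x y) * (1 - sInf (segSet K x y))) /
      ((sSup (segSet K x y) - 1) * (- sInf (segSet K x y))))

/-- The Hilbert metric of a properly convex set `Ω`, in the chart of `f`. -/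
def hdist (f : Vd d →ₗ[ℝ] ℝ) (Ω : Set (Proj d)) (x y : Proj d) : ℝ :=
  affHilbertDist (pchart f '' Ω) (pchart f x) (pchart f y)

/-- The open face of a point `x` of the closure of an affine convex set `K`:
`x` together with all `y` in the closure such that some open segment contained in the closure
contains both `x` and `y`. -/
def affFace (K : Set (Vd d)) (x : Vd d) : Set (Vd d) :=
  insert x {y ∈ closure K | ∃ a b : Vd d, openSegment ℝ a b ⊆ closure K ∧
      x ∈ openSegment ℝ a b ∧ y ∈ openSegment ℝ a b}

/-- The open face `F_C(x)` of a point `x ∈ closure C`, for `C` properly convex in the chart of `f`. -/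
def pface (f : Vd d →ₗ[ℝ] ℝ) (C : Set (Proj d)) (x : Proj d) : Set (Proj d) :=
  insert x {y ∈ closure C | pchart f y ∈ affFace (pchart f '' C) (pchart f x)}

/-- `F_C(A) = ⋃_{x ∈ A} F_C(x)`. -/
def pfaceSet (f : Vd d →ₗ[ℝ] ℝ) (C : Set (Proj d)) (A : Set (Proj d)) : Set (Proj d) :=
  ⋃ x ∈ A, pface f C x

/-- The Hilbert metric of the open face `F_C(x)` (a properly convex set open in its span). -/
def pfaceDist (f : Vd d →ₗ[ℝ] ℝ) (C : Set (Proj d)) (x : Proj d) (p q : Proj d) : ℝ :=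
  affHilbertDist (pchart f '' pface f C x) (pchart f p) (pchart f q)

/-- The ideal boundary `∂ᵢ C = closure C ∩ ∂Ω` of a subset `C` of a domain `Ω`. -/
def idealBdry (Ω C : Set (Proj d)) : Set (Proj d) := closure C ∩ frontier Ω

/-- Linear automorphisms of `ℝ^d` (inducing projective transformations). -/
abbrev GLd (d : ℕ) := (Vd d) ≃ₗ[ℝ] (Vd d)

/-- The projective action of a linear automorphism. -/
def pact (g : GLd d) (x : Proj d) : Proj d := Projectivization.map g.toLinearMap g.injective x

/-- Orbit of a point under a set of linear automorphisms. -/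
def orbitOf (S : Set (GLd d)) (p : Proj d) : Set (Proj d) := {q | ∃ γ ∈ S, q = pact γ p}

/-- The limit set of a set of automorphisms of `Ω`: all boundary accumulation points of orbits. -/
def limitSetOf (Ω : Set (Proj d)) (S : Set (GLd d)) : Set (Proj d) :=
  frontier Ω ∩ ⋃ p ∈ Ω, closure (orbitOf S p)

/-- The limit set of a subgroup. -/
def limitSet (Ω : Set (Proj d)) (Γ : Subgroup (GLd d)) : Set (Proj d) :=
  limitSetOf Ω {γ : GLd d | γ ∈ Γ}

/-- Open `r`-neighborhood of `A` in `(Ω, hdist)`. -/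
def hnbhd (f : Vd d →ₗ[ℝ] ℝ) (Ω A : Set (Proj d)) (r : ℝ) : Set (Proj d) :=
  {x ∈ Ω | ∃ a ∈ A, hdist f Ω x a < r}

/-- Open metric ball in `(Ω, hdist)`. -/
def hball (f : Vd d →ₗ[ℝ] ℝ) (Ω : Set (Proj d)) (x₀ : Proj d) (r : ℝ) : Set (Proj d) :=
  {y ∈ Ω | hdist f Ω x₀ y < r}

/-- The Hilbert-metric diameter of `A` is at most `D`. -/
def DiamLE (f : Vd d →ₗ[ℝ] ℝ) (Ω A : Set (Proj d)) (D : ℝ) : Prop :=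
  ∀ x ∈ A, ∀ y ∈ A, hdist f Ω x y ≤ D

/-- `X` is unbounded in `(Ω, hdist)`. -/
def HUnbounded (f : Vd d →ₗ[ℝ] ℝ) (Ω X : Set (Proj d)) : Prop := ¬ ∃ D : ℝ, DiamLE f Ω X D

/-- A strongly isolated collection: intersections of `r`-neighborhoods of distinct
members have uniformly bounded diameter. -/
def StronglyIsolated (f : Vd d →ₗ[ℝ] ℝ) (Ω : Set (Proj d)) (𝒳 : Set (Set (Proj d))) : Prop :=
  ∀ r > (0:ℝ), ∃ D > (0:ℝ), ∀ X₁ ∈ 𝒳, ∀ X₂ ∈ 𝒳, X₁ ≠ X₂ →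
    DiamLE f Ω (hnbhd f Ω X₁ r ∩ hnbhd f Ω X₂ r) D

/-- A `Γ`-invariant collection of sets. -/
def GInvariant (Γ : Subgroup (GLd d)) (𝒳 : Set (Set (Proj d))) : Prop :=
  ∀ γ ∈ Γ, ∀ X ∈ 𝒳, pact γ '' X ∈ 𝒳

/-- A naive convex co-compact triple `(Ω, C, Γ)`. -/
structure IsNCC (f : Vd d →ₗ[ℝ] ℝ) (Ω C : Set (Proj d)) (Γ : Subgroup (GLd d)) : Prop where
  dom : IsPCDomain f Ω
  subset : C ⊆ Ω
  nonempty : C.Nonempty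
  closedIn : closure C ∩ Ω ⊆ C
  convex : Convex ℝ (pchart f '' C)
  invΩ : ∀ γ ∈ Γ, pact γ '' Ω = Ω
  invC : ∀ γ ∈ Γ, pact γ '' C = C
  discrete : ∀ K : Set (Proj d), K ⊆ Ω → IsCompact K →
      {γ : GLd d | γ ∈ Γ ∧ (pact γ '' K ∩ K).Nonempty}.Finite
  cocompact : ∃ K : Set (Proj d), K ⊆ C ∧ IsCompact K ∧ ∀ x ∈ C, ∃ γ ∈ Γ, pact γ x ∈ K

/-- `𝒳` is a collection of closed unbounded convex subsets of `C`. -/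
structure IsCUC (f : Vd d →ₗ[ℝ] ℝ) (Ω C : Set (Proj d)) (𝒳 : Set (Set (Proj d))) : Prop where
  sub : ∀ X ∈ 𝒳, X ⊆ C
  closedIn : ∀ X ∈ 𝒳, closure X ∩ Ω ⊆ X
  unbdd : ∀ X ∈ 𝒳, HUnbounded f Ω X
  convex : ∀ X ∈ 𝒳, Convex ℝ (pchart f '' X)

/-- The standard `k`-dimensional projective simplex, with vertices `e_0, …, e_k`. -/
def stdSimplexP (d k : ℕ) : Set (Proj d) :=
  {x : Proj d | ∃ (c : Vd d) (hc : c ≠ 0), (∀ i : Fin d, (i : ℕ) ≤ k → 0 < c i) ∧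
      (∀ i : Fin d, k < (i : ℕ) → c i = 0) ∧ x = Projectivization.mk ℝ c hc}

/-- `S` is a `k`-dimensional projective simplex. -/
def IsSimplex (k : ℕ) (S : Set (Proj d)) : Prop :=
  ∃ g : GLd d, pact g '' stdSimplexP d k = S

/-- `S` is properly embedded in `C` (the inclusion is a proper map). -/
def ProperlyEmbedded (C S : Set (Proj d)) : Prop := S ⊆ C ∧ closure S ∩ C ⊆ S

/-- `𝒳` coarsely contains the properly embedded simplices of `C` of dimension at least two. -/
def CoarselyContainsSimplices (f : Vd d →ₗ[ℝ] ℝ) (Ω C : Set (Proj d))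
    (𝒳 : Set (Set (Proj d))) : Prop :=
  ∃ D > (0:ℝ), ∀ k : ℕ, 2 ≤ k → ∀ S : Set (Proj d), IsSimplex k S → ProperlyEmbedded C S →
    ∃ X ∈ 𝒳, S ⊆ hnbhd f Ω X D

/-- A peripheral family of the naive convex co-compact triple `(Ω, C, Γ)`. -/
def IsPeripheralFamily (f : Vd d →ₗ[ℝ] ℝ) (Ω C : Set (Proj d)) (Γ : Subgroup (GLd d))
    (𝒳 : Set (Set (Proj d))) : Prop :=
  GInvariant Γ 𝒳 ∧ StronglyIsolated f Ω 𝒳 ∧ CoarselyContainsSimplices f Ω C 𝒳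

/-- `Hausdorff distance between A and B (w.r.t. the distance function ρ) is at most M`. -/
def HausdorffLE {α : Type*} (ρ : α → α → ℝ) (A B : Set α) (M : ℝ) : Prop :=
  (∀ a ∈ A, ∀ ε > (0:ℝ), ∃ b ∈ B, ρ a b < M + ε) ∧
  (∀ b ∈ B, ∀ ε > (0:ℝ), ∃ a ∈ A, ρ a b < M + ε)

/-- The closed convex hull of `A ⊆ closure Ω` taken inside `closure Ω`, in the chart of `f`. -/
def projConvHull (f : Vd d →ₗ[ℝ] ℝ) (Ω A : Set (Proj d)) : Set (Proj d) :=
  {z ∈ closure Ω | pchart f z ∈ closure (convexHull ℝ (pchart f '' A))}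

/-- The convex core of `Γ`: the closed convex hull of the limit set, intersected with `Ω`. -/
def pcore (f : Vd d →ₗ[ℝ] ℝ) (Ω : Set (Proj d)) (Γ : Subgroup (GLd d)) : Set (Proj d) :=
  projConvHull f Ω (limitSet Ω Γ) ∩ Ω

/-- `Γ` is a convex co-compact subgroup of `Aut(Ω)`. -/
structure IsCCSubgroup (f : Vd d →ₗ[ℝ] ℝ) (Ω : Set (Proj d)) (Γ : Subgroup (GLd d)) : Prop where
  dom : IsPCDomain f Ω
  invΩ : ∀ γ ∈ Γ, pact γ '' Ω = Ω
  discrete : ∀ K : Set (Proj d), K ⊆ Ω → IsCompact K →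
      {γ : GLd d | γ ∈ Γ ∧ (pact γ '' K ∩ K).Nonempty}.Finite
  coreNonempty : (pcore f Ω Γ).Nonempty
  cocompact : ∃ K : Set (Proj d), K ⊆ pcore f Ω Γ ∧ IsCompact K ∧
      ∀ x ∈ pcore f Ω Γ, ∃ γ ∈ Γ, pact γ x ∈ K

/-!
In the affine chart of `f`, `Ω` becomes a bounded convex open set `K`, and a chord through
`x ≠ y` is parametrized by `t ↦ x + t • (y - x)`, with endpoint parameters `r ≤ 0` and `s ≥ 1`.
Along a subsequence with `d_Ω(p_n, q_n) < M`, the endpoint parameters `r_n < 0 < 1 < s_n` of the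
chords through `p_n, q_n` stay bounded (the chords do not shrink), so they converge along a
further subsequence to parameters `r, s` of points `a, b` of `closure K` on the line through
`p, q`. The bound `s_n (1 - r_n) ≤ e^{2M} (s_n - 1) (-r_n)` passes to the limit, and since its left
side is at least `1` it forces `r < 0` and `s > 1`. Hence `p, q` both lie in the open segment
`(a, b) ⊆ closure K`: they are in the same open face, `(a, b)` lies in that face, and the Hilbert
distance of the face between `p` and `q` is at most `½ log [a, p, q, b] ≤ M`.
-/

open Real

-- With `a = x + r • (y - x)` and `b = x + s • (y - x)`, this is the cross ratio `[a, x, y, b]`.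
def crossRatio (r s : ℝ) : ℝ := s * (1 - r) / ((s - 1) * -r)

section CrossRatio

variable {r r' s s' C : ℝ}

lemma crossRatio_le_iff (hr : r < 0) (hs : 1 < s) :
    crossRatio r s ≤ C ↔ s * (1 - r) ≤ C * ((s - 1) * -r) :=
  div_le_iff₀ (mul_pos (by linarith) (by linarith))

lemma one_le_crossRatio (hr : r < 0) (hs : 1 < s) : 1 ≤ crossRatio r s := by
  rw [crossRatio, one_le_div (mul_pos (by linarith) (by linarith))]
  nlinarith

lemma crossRatio_le_crossRatio (hr : r ≤ r') (hr' : r' < 0) (hs' : 1 < s') (hs : s' ≤ s) :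
    crossRatio r s ≤ crossRatio r' s' := by
  have h1 : 0 < s' - 1 := by linarith
  have h2 : 0 < -r' := by linarith
  rw [crossRatio, crossRatio, ← div_mul_div_comm, ← div_mul_div_comm]
  apply mul_le_mul
  · rw [div_le_div_iff₀ (by linarith) h1]; nlinarith
  · rw [div_le_div_iff₀ (by linarith) h2]; nlinarith
  · exact div_nonneg (by linarith) (by linarith)
  · exact div_nonneg (by linarith) h1.le

lemma neg_and_one_lt_of_mul_le (hr : r ≤ 0) (hs : 1 ≤ s)
    (h : s * (1 - r) ≤ C * ((s - 1) * -r)) : r < 0 ∧ 1 < s := by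
  refine ⟨hr.lt_of_ne ?_, hs.lt_of_ne' ?_⟩ <;> rintro rfl <;> simp at h <;> linarith

end CrossRatio

section Prolongable

variable {E : Type*} [AddCommGroup E] [Module ℝ E] {C : Set E} {a b x y z : E}

-- For convex `C`, this says that `x` and `y` lie in a common open segment of `C`.
def Prolongable (C : Set E) (x y : E) : Prop :=
  ∃ r < (0 : ℝ), ∃ s > (1 : ℝ), x + r • (y - x) ∈ C ∧ x + s • (y - x) ∈ C

lemma add_smul_mem_openSegment {v : E} {r s t : ℝ} (hrt : r < t) (hts : t < s) :
    x + t • v ∈ openSegment ℝ (x + r • v) (x + s • v) := by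
  have hsr : 0 < s - r := by linarith
  refine ⟨(s - t) / (s - r), (t - r) / (s - r), div_pos (by linarith) hsr,
    div_pos (by linarith) hsr, by field_simp; ring, ?_⟩
  match_scalars <;> field_simp <;> ring

lemma Prolongable.symm (h : Prolongable C x y) : Prolongable C y x := by
  obtain ⟨r, hr, s, hs, hrC, hsC⟩ := h
  exact ⟨1 - s, by linarith, 1 - r, by linarith, by convert hsC using 1; module,
    by convert hrC using 1; module⟩

-- The witness is the convex combination of the two given points with weights `1 - r' : -r`.
lemma Convex.exists_neg_add_smul_sub_mem (hC : Convex ℝ C) {r r' : ℝ} (hr : r < 0) (hr' : r' < 0)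
    (hx : x + r • (y - x) ∈ C) (hy : y + r' • (z - y) ∈ C) :
    ∃ t < (0 : ℝ), x + t • (z - x) ∈ C := by
  have hD : 0 < 1 - r - r' := by linarith
  refine ⟨-(r * r') / (1 - r - r'), div_neg_of_neg_of_pos (by nlinarith) hD, ?_⟩
  convert hC hx hy (a := (1 - r') / (1 - r - r')) (b := -r / (1 - r - r'))
    (div_pos (by linarith) hD).le (div_pos (by linarith) hD).le (by field_simp; ring) using 1
  match_scalars <;> field_simp <;> ring

lemma Prolongable.trans (hC : Convex ℝ C) (h₁ : Prolongable C x y) (h₂ : Prolongable C y z) :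
    Prolongable C x z := by
  have left : ∀ {x y z : E}, Prolongable C x y → Prolongable C y z →
      ∃ t < (0 : ℝ), x + t • (z - x) ∈ C := by
    rintro x y z ⟨r, hr, -, -, hrC, -⟩ ⟨r', hr', -, -, hr'C, -⟩
    exact hC.exists_neg_add_smul_sub_mem hr hr' hrC hr'C
  obtain ⟨r, hr, hrC⟩ := left h₁ h₂
  obtain ⟨t, ht, htC⟩ := left h₂.symm h₁.symm
  exact ⟨r, hr, 1 - t, by linarith, hrC, by convert htC using 1; module⟩

lemma Prolongable.exists_openSegment (hC : Convex ℝ C) (h : Prolongable C x y) :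
    ∃ a b, openSegment ℝ a b ⊆ C ∧ x ∈ openSegment ℝ a b ∧ y ∈ openSegment ℝ a b := by
  obtain ⟨r, hr, s, hs, hrC, hsC⟩ := h
  refine ⟨_, _, hC.openSegment_subset hrC hsC, ?_, ?_⟩
  · simpa using add_smul_mem_openSegment (x := x) (v := y - x) hr (by linarith : (0 : ℝ) < s)
  · simpa using add_smul_mem_openSegment (x := x) (v := y - x) (by linarith : r < 1) hs

lemma exists_neg_add_smul_sub_mem_openSegment (hx : x ∈ openSegment ℝ a b)
    (hy : y ∈ openSegment ℝ a b) : ∃ r < (0 : ℝ), x + r • (y - x) ∈ openSegment ℝ a b := by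
  rw [openSegment_eq_image'] at hx hy ⊢
  obtain ⟨u, ⟨hu0, hu1⟩, rfl⟩ := hx
  obtain ⟨v, ⟨hv0, hv1⟩, rfl⟩ := hy
  have hm : 0 < min u (1 - u) := lt_min hu0 (by linarith)
  have hmu := min_le_left u (1 - u)
  have hmu' := min_le_right u (1 - u)
  refine ⟨-min u (1 - u), neg_lt_zero.2 hm, u - min u (1 - u) * (v - u),
    ⟨by nlinarith [mul_pos hm (by linarith : 0 < 1 - (v - u))],
      by nlinarith [mul_pos hm (by linarith : 0 < 1 + (v - u))]⟩, by module⟩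

lemma prolongable_of_mem_openSegment (hab : openSegment ℝ a b ⊆ C) (hx : x ∈ openSegment ℝ a b)
    (hy : y ∈ openSegment ℝ a b) : Prolongable C x y := by
  obtain ⟨r, hr, hrC⟩ := exists_neg_add_smul_sub_mem_openSegment hx hy
  obtain ⟨t, ht, htC⟩ := exists_neg_add_smul_sub_mem_openSegment hy hx
  exact ⟨r, hr, 1 - t, by linarith, hab hrC, by convert hab htC using 1; module⟩

end Prolongable

section Chord

variable {K : Set (Vd d)} {x y : Vd d}

lemma isClosed_segSet (K : Set (Vd d)) (x y : Vd d) : IsClosed (segSet K x y) :=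
  isClosed_closure.preimage (by fun_prop)

lemma abs_sub_mul_norm_le_of_mem_segSet {B t t' : ℝ} (hB : ∀ w ∈ closure K, ‖w‖ ≤ B)
    (ht : t ∈ segSet K x y) (ht' : t' ∈ segSet K x y) : |t - t'| * ‖y - x‖ ≤ 2 * B :=
  calc |t - t'| * ‖y - x‖ = ‖(x + t • (y - x)) - (x + t' • (y - x))‖ := by
        rw [add_sub_add_left_eq_sub, ← sub_smul, norm_smul, Real.norm_eq_abs]
    _ ≤ ‖x + t • (y - x)‖ + ‖x + t' • (y - x)‖ := norm_sub_le _ _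
    _ ≤ 2 * B := by linarith [hB _ ht, hB _ ht']

lemma isBounded_segSet (hK : Bornology.IsBounded K) (hxy : x ≠ y) :
    Bornology.IsBounded (segSet K x y) := by
  obtain ⟨B, hB⟩ := isBounded_iff_forall_norm_le.1 hK.closure
  have hxy' : 0 < ‖y - x‖ := norm_pos_iff.2 (sub_ne_zero.2 hxy.symm)
  refine Metric.isBounded_iff.2 ⟨2 * B / ‖y - x‖, fun t ht t' ht' => ?_⟩
  rw [Real.dist_eq, le_div_iff₀ hxy']
  exact abs_sub_mul_norm_le_of_mem_segSet hB ht ht'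

lemma affHilbertDist_of_ne (hxy : x ≠ y) :
    affHilbertDist K x y = 1 / 2 * log (crossRatio (sInf (segSet K x y)) (sSup (segSet K x y))) :=
  if_neg hxy

lemma affHilbertDist_le_of_mem_segSet (hK : Bornology.IsBounded K) (hxy : x ≠ y) {r s : ℝ}
    (hr : r < 0) (hs : 1 < s) (hrK : r ∈ segSet K x y) (hsK : s ∈ segSet K x y) :
    affHilbertDist K x y ≤ 1 / 2 * log (crossRatio r s) := by
  have hS := isBounded_segSet hK hxy
  have hinf : sInf (segSet K x y) ≤ r := csInf_le hS.bddBelow hrK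
  have hsup : s ≤ sSup (segSet K x y) := le_csSup hS.bddAbove hsK
  have hpos := one_le_crossRatio (hinf.trans_lt hr) (hs.trans_le hsup)
  rw [affHilbertDist_of_ne hxy]
  exact mul_le_mul_of_nonneg_left
    (log_le_log (by linarith) (crossRatio_le_crossRatio hinf hr hs hsup)) (by norm_num)

-- The chords `[xs n, ys n]` do not shrink, so their parameters stay bounded.
lemma eventually_mem_closedBall_of_tendsto (hK : Bornology.IsBounded K) (hxy : x ≠ y)
    {xs ys : ℕ → Vd d} (hx : Tendsto xs atTop (𝓝 x)) (hy : Tendsto ys atTop (𝓝 y))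
    {rs ss : ℕ → ℝ} (hrK : ∀ n, rs n ∈ segSet K (xs n) (ys n))
    (hsK : ∀ n, ss n ∈ segSet K (xs n) (ys n)) (hr : ∀ n, rs n < 0) (hs : ∀ n, 1 < ss n) :
    ∃ R, ∀ᶠ n in atTop, (rs n, ss n) ∈ Metric.closedBall (0 : ℝ × ℝ) R := by
  obtain ⟨B, hB⟩ := isBounded_iff_forall_norm_le.1 hK.closure
  have hxy' : 0 < ‖y - x‖ := norm_pos_iff.2 (sub_ne_zero.2 hxy.symm)
  have hlen : ∀ᶠ n in atTop, ‖y - x‖ / 2 < ‖ys n - xs n‖ :=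
    (hy.sub hx).norm.eventually (lt_mem_nhds (by linarith))
  refine ⟨4 * B / ‖y - x‖, hlen.mono fun n hn => ?_⟩
  have h := abs_sub_mul_norm_le_of_mem_segSet hB (hrK n) (hsK n)
  rw [abs_sub_comm, abs_of_pos (by linarith [hr n, hs n])] at h
  rw [mem_closedBall_zero_iff, Prod.norm_def, max_le_iff, Real.norm_eq_abs, Real.norm_eq_abs,
    abs_of_neg (hr n), abs_of_pos (by linarith [hs n]), le_div_iff₀ hxy', le_div_iff₀ hxy']
  constructor <;> nlinarith [hr n, hs n, norm_nonneg (ys n - xs n)]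

lemma exists_mem_segSet_crossRatio_le_of_tendsto (hK : Bornology.IsBounded K) (hxy : x ≠ y)
    {xs ys : ℕ → Vd d} (hx : Tendsto xs atTop (𝓝 x)) (hy : Tendsto ys atTop (𝓝 y))
    {rs ss : ℕ → ℝ} (hrK : ∀ n, rs n ∈ segSet K (xs n) (ys n))
    (hsK : ∀ n, ss n ∈ segSet K (xs n) (ys n)) (hr : ∀ n, rs n < 0) (hs : ∀ n, 1 < ss n)
    {C : ℝ} (hC : ∀ n, crossRatio (rs n) (ss n) ≤ C) :
    ∃ r < (0 : ℝ), ∃ s > (1 : ℝ), r ∈ segSet K x y ∧ s ∈ segSet K x y ∧ crossRatio r s ≤ C := by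
  obtain ⟨R, hR⟩ := eventually_mem_closedBall_of_tendsto hK hxy hx hy hrK hsK hr hs
  obtain ⟨⟨r, s⟩, -, φ, hφ, hlim⟩ := tendsto_subseq_of_frequently_bounded
    Metric.isBounded_closedBall hR.frequently
  have hr' : Tendsto (fun n => rs (φ n)) atTop (𝓝 r) := hlim.fst_nhds
  have hs' : Tendsto (fun n => ss (φ n)) atTop (𝓝 s) := hlim.snd_nhds
  have hx' := hx.comp hφ.tendsto_atTop
  have hy' := hy.comp hφ.tendsto_atTop
  have hmem : ∀ {ts : ℕ → ℝ} {t : ℝ}, Tendsto (fun n => ts (φ n)) atTop (𝓝 t) →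
      (∀ n, ts n ∈ segSet K (xs n) (ys n)) → t ∈ segSet K x y := fun ht hts =>
    isClosed_closure.mem_of_tendsto (hx'.add (ht.smul (hy'.sub hx')))
      (.of_forall fun n => hts (φ n))
  have hineq : s * (1 - r) ≤ C * ((s - 1) * -r) :=
    le_of_tendsto_of_tendsto' (hs'.mul (tendsto_const_nhds.sub hr'))
      (tendsto_const_nhds.mul ((hs'.sub tendsto_const_nhds).mul hr'.neg))
      fun n => (crossRatio_le_iff (hr _) (hs _)).1 (hC _)
  obtain ⟨hr0, hs1⟩ := neg_and_one_lt_of_mul_le (le_of_tendsto' hr' fun n => (hr _).le)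
    (ge_of_tendsto' hs' fun n => (hs _).le) hineq
  exact ⟨r, hr0, s, hs1, hmem hr' hrK, hmem hs' hsK, (crossRatio_le_iff hr0 hs1).2 hineq⟩

lemma mem_affFace_of_prolongable (hK : Convex ℝ (closure K))
    (h : Prolongable (closure K) x y) : y ∈ affFace K x := by
  obtain ⟨a, b, hab, hx, hy⟩ := h.exists_openSegment hK
  exact Or.inr ⟨hab hy, a, b, hab, hx, hy⟩

lemma affFace_subset_of_prolongable (hK : Convex ℝ (closure K))
    (h : Prolongable (closure K) x y) : affFace K y ⊆ affFace K x := by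
  rintro z (rfl | ⟨-, a, b, hab, hy, hz⟩)
  · exact mem_affFace_of_prolongable hK h
  · exact mem_affFace_of_prolongable hK (h.trans hK (prolongable_of_mem_openSegment hab hy hz))

lemma affFace_eq_of_prolongable (hK : Convex ℝ (closure K)) (h : Prolongable (closure K) x y) :
    affFace K x = affFace K y :=
  (affFace_subset_of_prolongable hK h.symm).antisymm (affFace_subset_of_prolongable hK h)

end Chord

section Chart

variable {f : Vd d →ₗ[ℝ] ℝ} {Ω : Set (Proj d)} {x y : Proj d}

lemma pchart_mk {v : Vd d} (hv : v ≠ 0) :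
    pchart f (Projectivization.mk ℝ v hv) = (f v)⁻¹ • v := by
  obtain ⟨a, ha⟩ := Projectivization.exists_smul_eq_mk_rep ℝ v hv
  rw [pchart, ← ha, Units.smul_def, map_smul, smul_smul, smul_eq_mul, mul_inv]
  rcases eq_or_ne (f v) 0 with h | h
  · simp [h]
  · field_simp

lemma apply_pchart (hx : f x.rep ≠ 0) : f (pchart f x) = 1 := by
  rw [pchart, map_smul, smul_eq_mul, inv_mul_cancel₀ hx]

lemma pchart_ne_zero (hx : f x.rep ≠ 0) : pchart f x ≠ 0 := fun h => by
  simpa [h] using apply_pchart hx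

lemma mk_pchart (hx : f x.rep ≠ 0) :
    Projectivization.mk ℝ (pchart f x) (pchart_ne_zero hx) = x := by
  conv_rhs => rw [← x.mk_rep]
  exact (Projectivization.mk_eq_mk_iff' ℝ _ _ _ _).2 ⟨(f x.rep)⁻¹, rfl⟩

lemma pchart_inj (hx : f x.rep ≠ 0) (hy : f y.rep ≠ 0) (h : pchart f x = pchart f y) : x = y := by
  rw [← mk_pchart hx, ← mk_pchart hy]
  congr 1

lemma isOpen_pchart_preimage {W : Set (Vd d)} (hW : IsOpen W) (hW0 : ∀ w ∈ W, f w ≠ 0) :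
    IsOpen (pchart f ⁻¹' W) := by
  have hf := f.continuous_of_finiteDimensional
  have hq : IsQuotientMap (@Quotient.mk' _ (projectivizationSetoid ℝ (Vd d))) :=
    isQuotientMap_quotient_mk'
  refine hq.isOpen_preimage.1 ?_
  convert (((hf.continuousOn.inv₀ fun _ h => h).smul continuousOn_id).isOpen_inter_preimage
    (isOpen_ne_fun hf continuous_const) hW).preimage continuous_subtype_val using 1
  ext ⟨v, hv⟩
  change pchart f (Projectivization.mk ℝ v hv) ∈ W ↔ f v ≠ 0 ∧ (f v)⁻¹ • v ∈ W
  rw [pchart_mk]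
  refine ⟨fun h => ⟨fun h0 => hW0 _ h ?_, h⟩, And.right⟩
  simp [h0]

lemma continuousAt_pchart (hx : f x.rep ≠ 0) : ContinuousAt (pchart f) x := by
  refine tendsto_nhds.2 fun W hW hxW => ?_
  have hW' : IsOpen (W ∩ {w | f w ≠ 0}) :=
    hW.inter (isOpen_ne_fun f.continuous_of_finiteDimensional continuous_const)
  exact mem_of_superset ((isOpen_pchart_preimage hW' fun w hw => hw.2).mem_nhds
    ⟨hxW, by simp [apply_pchart hx]⟩) fun z hz => hz.1

lemma pchart_mem_closure_image (hx : x ∈ closure Ω) (hfx : f x.rep ≠ 0) :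
    pchart f x ∈ closure (pchart f '' Ω) :=
  (continuousAt_pchart hfx).continuousWithinAt.mem_closure_image hx

lemma isOpen_setOf_mk_mem (hΩ : IsOpen Ω) :
    IsOpen {w : Vd d | ∃ hw : w ≠ 0, Projectivization.mk ℝ w hw ∈ Ω} := by
  let g : {v : Vd d // v ≠ 0} → Proj d := fun v => Projectivization.mk ℝ (v : Vd d) v.2
  have h : {w : Vd d | ∃ hw : w ≠ 0, Projectivization.mk ℝ w hw ∈ Ω} =
      Subtype.val '' (g ⁻¹' Ω) := by
    ext w
    constructor
    · rintro ⟨hw, hwΩ⟩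
      exact ⟨⟨w, hw⟩, hwΩ, rfl⟩
    · rintro ⟨⟨v, hv⟩, hvΩ, rfl⟩
      exact ⟨hv, hvΩ⟩
  rw [h]
  exact isOpen_ne.isOpenMap_subtype_val _ (hΩ.preimage (continuous_quot_mk : Continuous g))

lemma pchart_image_eq (hΩ : ∀ z ∈ Ω, f z.rep ≠ 0) :
    pchart f '' Ω = {w | f w = 1} ∩ {w | ∃ hw : w ≠ 0, Projectivization.mk ℝ w hw ∈ Ω} := by
  ext w
  constructor
  · rintro ⟨z, hz, rfl⟩
    exact ⟨apply_pchart (hΩ z hz), pchart_ne_zero (hΩ z hz), by rwa [mk_pchart (hΩ z hz)]⟩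
  · rintro ⟨hw1 : f w = 1, hw0, hwΩ⟩
    exact ⟨_, hwΩ, by rw [pchart_mk, hw1, inv_one, one_smul]⟩

lemma exists_mem_closure_pchart_eq (hΩ : ∀ z ∈ Ω, f z.rep ≠ 0) {w : Vd d}
    (hw : w ∈ closure (pchart f '' Ω)) : ∃ z ∈ closure Ω, pchart f z = w := by
  have hw1 : f w = 1 := closure_minimal (by rintro _ ⟨z, hz, rfl⟩; exact apply_pchart (hΩ z hz))
    (isClosed_eq f.continuous_of_finiteDimensional continuous_const) hw
  have hw0 : w ≠ 0 := by rintro rfl; simp at hw1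
  refine ⟨Projectivization.mk ℝ w hw0, ?_, by rw [pchart_mk, hw1, inv_one, one_smul]⟩
  have hsub : (⟨w, hw0⟩ : {v : Vd d // v ≠ 0}) ∈ closure (Subtype.val ⁻¹' (pchart f '' Ω)) := by
    rwa [closure_subtype, image_preimage_eq_of_subset]
    rintro _ ⟨z, hz, rfl⟩
    exact ⟨⟨_, pchart_ne_zero (hΩ z hz)⟩, rfl⟩
  refine map_mem_closure continuous_quot_mk hsub ?_
  rintro ⟨v, hv⟩ ⟨z, hz, rfl⟩
  change Projectivization.mk ℝ (pchart f z) hv ∈ Ω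
  rwa [mk_pchart (hΩ z hz)]

end Chart

section Domain

variable {f : Vd d →ₗ[ℝ] ℝ} {Ω : Set (Proj d)} {p q z₁ z₂ : Proj d}

lemma isOpen_setOf_add_smul_mem (hΩ : IsPCDomain f Ω) (hz₁ : z₁ ∈ Ω) (hz₂ : z₂ ∈ Ω) :
    IsOpen {t : ℝ | pchart f z₁ + t • (pchart f z₂ - pchart f z₁) ∈ pchart f '' Ω} := by
  have hc : ∀ z ∈ Ω, f z.rep ≠ 0 := fun z hz => hΩ.pc.chartOK z (subset_closure hz)
  have h1 : ∀ t : ℝ, f (pchart f z₁ + t • (pchart f z₂ - pchart f z₁)) = 1 := fun t => by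
    simp [apply_pchart (hc _ hz₁), apply_pchart (hc _ hz₂)]
  simp only [pchart_image_eq hc, mem_inter_iff, mem_ofPred_eq, h1, true_and]
  exact (isOpen_setOf_mk_mem hΩ.isOpen).preimage (by fun_prop)

lemma exists_mem_segSet_neg_one_lt (hΩ : IsPCDomain f Ω) (hz₁ : z₁ ∈ Ω) (hz₂ : z₂ ∈ Ω) :
    ∃ r < (0 : ℝ), ∃ s > (1 : ℝ), r ∈ segSet (pchart f '' Ω) (pchart f z₁) (pchart f z₂) ∧
      s ∈ segSet (pchart f '' Ω) (pchart f z₁) (pchart f z₂) := by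
  set S := {t : ℝ | pchart f z₁ + t • (pchart f z₂ - pchart f z₁) ∈ pchart f '' Ω}
  have hS : IsOpen S := isOpen_setOf_add_smul_mem hΩ hz₁ hz₂
  have h0 : (0 : ℝ) ∈ S := by simpa [S] using mem_image_of_mem (pchart f) hz₁
  have h1 : (1 : ℝ) ∈ S := by simpa [S] using mem_image_of_mem (pchart f) hz₂
  have hleft : ∀ᶠ t in 𝓝[<] (0 : ℝ), t ∈ S ∧ t < 0 :=
    (eventually_nhdsWithin_of_eventually_nhds (hS.eventually_mem h0)).and self_mem_nhdsWithin
  have hright : ∀ᶠ t in 𝓝[>] (1 : ℝ), t ∈ S ∧ 1 < t :=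
    (eventually_nhdsWithin_of_eventually_nhds (hS.eventually_mem h1)).and self_mem_nhdsWithin
  obtain ⟨r, hrS, hr⟩ := hleft.exists
  obtain ⟨s, hsS, hs⟩ := hright.exists
  exact ⟨r, hr, s, hs, subset_closure hrS, subset_closure hsS⟩

lemma exists_hdist_eq_crossRatio (hΩ : IsPCDomain f Ω) (hz₁ : z₁ ∈ Ω) (hz₂ : z₂ ∈ Ω)
    (hne : pchart f z₁ ≠ pchart f z₂) :
    ∃ r < (0 : ℝ), ∃ s > (1 : ℝ), r ∈ segSet (pchart f '' Ω) (pchart f z₁) (pchart f z₂) ∧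
      s ∈ segSet (pchart f '' Ω) (pchart f z₁) (pchart f z₂) ∧
      hdist f Ω z₁ z₂ = 1 / 2 * log (crossRatio r s) := by
  obtain ⟨r, hr, s, hs, hrK, hsK⟩ := exists_mem_segSet_neg_one_lt hΩ hz₁ hz₂
  have hS := isBounded_segSet hΩ.pc.bounded hne
  have hS' := isClosed_segSet (pchart f '' Ω) (pchart f z₁) (pchart f z₂)
  exact ⟨_, (csInf_le hS.bddBelow hrK).trans_lt hr, _, hs.trans_le (le_csSup hS.bddAbove hsK),
    hS'.csInf_mem ⟨r, hrK⟩ hS.bddBelow, hS'.csSup_mem ⟨r, hrK⟩ hS.bddAbove,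
    affHilbertDist_of_ne hne⟩

lemma hdist_nonneg (hΩ : IsPCDomain f Ω) (hz₁ : z₁ ∈ Ω) (hz₂ : z₂ ∈ Ω) :
    0 ≤ hdist f Ω z₁ z₂ := by
  by_cases hne : pchart f z₁ = pchart f z₂
  · simp [hdist, affHilbertDist, hne]
  · obtain ⟨r, hr, s, hs, -, -, h⟩ := exists_hdist_eq_crossRatio hΩ hz₁ hz₂ hne
    rw [h]
    have := log_nonneg (one_le_crossRatio hr hs)
    positivity

lemma exists_mem_segSet_crossRatio_le (hΩ : IsPCDomain f Ω) {pseq qseq : ℕ → Proj d}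
    (hpΩ : ∀ n, pseq n ∈ Ω) (hqΩ : ∀ n, qseq n ∈ Ω)
    (hp : Tendsto pseq atTop (𝓝 p)) (hq : Tendsto qseq atTop (𝓝 q))
    (hpc : p ∈ closure Ω) (hqc : q ∈ closure Ω) (hxy : pchart f p ≠ pchart f q) {M : ℝ}
    (hM : ∃ᶠ n in atTop, hdist f Ω (pseq n) (qseq n) < M) :
    ∃ r < (0 : ℝ), ∃ s > (1 : ℝ), r ∈ segSet (pchart f '' Ω) (pchart f p) (pchart f q) ∧
      s ∈ segSet (pchart f '' Ω) (pchart f p) (pchart f q) ∧ crossRatio r s ≤ exp (2 * M) := by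
  have hx := (continuousAt_pchart (hΩ.pc.chartOK p hpc)).tendsto.comp hp
  have hy := (continuousAt_pchart (hΩ.pc.chartOK q hqc)).tendsto.comp hq
  have hne : ∀ᶠ n in atTop, pchart f (pseq n) ≠ pchart f (qseq n) :=
    ((hy.sub hx).eventually_ne (sub_ne_zero.2 hxy.symm)).mono fun n hn => (sub_ne_zero.1 hn).symm
  obtain ⟨φ, hφ, hφM⟩ := extraction_of_frequently_atTop (hM.and_eventually hne)
  have hchords : ∀ k, ∃ r < (0 : ℝ), ∃ s > (1 : ℝ),
      r ∈ segSet (pchart f '' Ω) (pchart f (pseq (φ k))) (pchart f (qseq (φ k))) ∧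
      s ∈ segSet (pchart f '' Ω) (pchart f (pseq (φ k))) (pchart f (qseq (φ k))) ∧
      crossRatio r s ≤ exp (2 * M) := by
    intro k
    obtain ⟨r, hr, s, hs, hrK, hsK, hd⟩ :=
      exists_hdist_eq_crossRatio hΩ (hpΩ _) (hqΩ _) (hφM k).2
    have hlog : log (crossRatio r s) < 2 * M := by linarith [(hφM k).1]
    exact ⟨r, hr, s, hs, hrK, hsK,
      ((log_lt_iff_lt_exp (by linarith [one_le_crossRatio hr hs])).1 hlog).le⟩
  choose rs hr ss hs hrK hsK hC using hchords
  exact exists_mem_segSet_crossRatio_le_of_tendsto hΩ.pc.bounded hxy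
    (hx.comp hφ.tendsto_atTop) (hy.comp hφ.tendsto_atTop) hrK hsK hr hs hC

lemma pface_eq_sep (hp : p ∈ closure Ω) :
    pface f Ω p = {y ∈ closure Ω | pchart f y ∈ affFace (pchart f '' Ω) (pchart f p)} :=
  insert_eq_self.2 ⟨hp, mem_insert _ _⟩

lemma image_pface_subset_closure (hx : pchart f p ∈ closure (pchart f '' Ω)) :
    pchart f '' pface f Ω p ⊆ closure (pchart f '' Ω) := by
  rintro _ ⟨z, rfl | ⟨-, hz | ⟨hz, -⟩⟩, rfl⟩
  · exact hx
  · exact hz ▸ hx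
  · exact hz

lemma Icc_subset_segSet_image_pface (hΩ : IsPCDomain f Ω) {r s : ℝ} (hr : r < 0) (hs : 0 < s)
    (hrK : r ∈ segSet (pchart f '' Ω) (pchart f p) (pchart f q))
    (hsK : s ∈ segSet (pchart f '' Ω) (pchart f p) (pchart f q)) :
    Icc r s ⊆ segSet (pchart f '' pface f Ω p) (pchart f p) (pchart f q) := by
  set x := pchart f p
  set v := pchart f q - pchart f p
  have hseg : openSegment ℝ (x + r • v) (x + s • v) ⊆ closure (pchart f '' Ω) :=
    hΩ.pc.convex.closure.openSegment_subset hrK hsK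
  have hx : x ∈ openSegment ℝ (x + r • v) (x + s • v) := by
    simpa using add_smul_mem_openSegment (x := x) (v := v) hr hs
  have hIoo : Ioo r s ⊆ segSet (pchart f '' pface f Ω p) x (pchart f q) := by
    intro t ⟨hrt, hts⟩
    have ht := add_smul_mem_openSegment (x := x) (v := v) hrt hts
    obtain ⟨z, hz, hzt⟩ := exists_mem_closure_pchart_eq
      (fun z hz => hΩ.pc.chartOK z (subset_closure hz)) (hseg ht)
    refine subset_closure ⟨z, Or.inr ⟨hz, ?_⟩, hzt⟩
    rw [hzt]
    exact Or.inr ⟨hseg ht, _, _, hseg, hx, ht⟩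
  rw [← closure_Ioo (by linarith : r ≠ s)]
  exact (isClosed_segSet _ _ _).closure_subset_iff.2 hIoo

lemma pfaceDist_le (hΩ : IsPCDomain f Ω) (hpc : p ∈ closure Ω) (hxy : pchart f p ≠ pchart f q)
    {r s : ℝ} (hr : r < 0) (hs : 1 < s)
    (hrK : r ∈ segSet (pchart f '' Ω) (pchart f p) (pchart f q))
    (hsK : s ∈ segSet (pchart f '' Ω) (pchart f p) (pchart f q)) :
    pfaceDist f Ω p p q ≤ 1 / 2 * log (crossRatio r s) := by
  have hx := pchart_mem_closure_image hpc (hΩ.pc.chartOK p hpc)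
  have hI := Icc_subset_segSet_image_pface hΩ hr (by linarith) hrK hsK
  exact affHilbertDist_le_of_mem_segSet
    (hΩ.pc.bounded.closure.subset (image_pface_subset_closure hx)) hxy hr hs
    (hI ⟨le_rfl, by linarith⟩) (hI ⟨by linarith, le_rfl⟩)

lemma pface_eq_and_pfaceDist_le (hΩ : IsPCDomain f Ω) {pseq qseq : ℕ → Proj d}
    (hpΩ : ∀ n, pseq n ∈ Ω) (hqΩ : ∀ n, qseq n ∈ Ω)
    (hp : Tendsto pseq atTop (𝓝 p)) (hq : Tendsto qseq atTop (𝓝 q)) {M : ℝ}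
    (hM : ∃ᶠ n in atTop, hdist f Ω (pseq n) (qseq n) < M) :
    pface f Ω p = pface f Ω q ∧ pfaceDist f Ω p p q ≤ M := by
  have hpc : p ∈ closure Ω := mem_closure_of_tendsto hp (.of_forall hpΩ)
  have hqc : q ∈ closure Ω := mem_closure_of_tendsto hq (.of_forall hqΩ)
  by_cases hxy : pchart f p = pchart f q
  · obtain rfl := pchart_inj (hΩ.pc.chartOK p hpc) (hΩ.pc.chartOK q hqc) hxy
    obtain ⟨n, hn⟩ := hM.exists
    refine ⟨rfl, ?_⟩
    rw [pfaceDist, affHilbertDist, if_pos rfl]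
    linarith [hdist_nonneg hΩ (hpΩ n) (hqΩ n)]
  obtain ⟨r, hr, s, hs, hrK, hsK, hC⟩ :=
    exists_mem_segSet_crossRatio_le hΩ hpΩ hqΩ hp hq hpc hqc hxy hM
  refine ⟨?_, (pfaceDist_le hΩ hpc hxy hr hs hrK hsK).trans ?_⟩
  · rw [pface_eq_sep hpc, pface_eq_sep hqc,
      affFace_eq_of_prolongable hΩ.pc.convex.closure ⟨r, hr, s, hs, hrK, hsK⟩]
  · have := log_le_log (by linarith [one_le_crossRatio hr hs]) hC
    rw [log_exp] at this
    linarith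

end Domain

/-- if `p_n → p`, `q_n → q` in `closure Ω` and `liminf hdist(p_n,q_n) < ∞`,
then `F_Ω(p) = F_Ω(q)` and the face Hilbert distance between `p` and `q` is at most
the liminf. -/
theorem stmt_2 {d : ℕ} (f : Vd d →ₗ[ℝ] ℝ) (Ω : Set (Proj d)) (hΩ : IsPCDomain f Ω)
    (p q : Proj d) (pseq qseq : ℕ → Proj d)
    (hpΩ : ∀ n, pseq n ∈ Ω) (hqΩ : ∀ n, qseq n ∈ Ω)
    (hp : Tendsto pseq atTop (nhds p)) (hq : Tendsto qseq atTop (nhds q))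
    (hfin : Filter.liminf (fun n => ((hdist f Ω (pseq n) (qseq n) : EReal))) atTop < ⊤) :
    pface f Ω p = pface f Ω q ∧
      (pfaceDist f Ω p p q : EReal) ≤
        Filter.liminf (fun n => ((hdist f Ω (pseq n) (qseq n) : EReal))) atTop := by
  have key : ∀ M : ℝ, liminf (fun n => ((hdist f Ω (pseq n) (qseq n) : EReal))) atTop < M →
      pface f Ω p = pface f Ω q ∧ pfaceDist f Ω p p q ≤ M := fun M hM =>
    pface_eq_and_pfaceDist_le hΩ hpΩ hqΩ hp hq
      ((frequently_lt_of_liminf_lt (by isBoundedDefault) hM).mono fun _ h =>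
        EReal.coe_lt_coe_iff.1 h)
  obtain ⟨M, hM, -⟩ := EReal.exists_between_coe_real hfin
  exact ⟨(key M hM).1,
    EReal.le_of_forall_lt_iff_le.1 fun M hM => EReal.coe_le_coe_iff.2 (key M hM).2⟩
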